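/- If P is a height-(0,1) type-C poset whose relation graph RG(P) has connected components K₁,...,Kₙ, then ind g_C(P) = Σᵢ ind g_C(P_{Kᵢ}), where P_{Kᵢ} is the type-C poset induced by the elements corresponding to component Kᵢ. -/

import Mathlib

/-- The underlying set `{-n,...,-1,1,...,n}` of a type-C poset, as a finset of integers. -/
noncomputable def Idx (n : ℕ) : Finset ℤ := (Finset.Icc (-(n : ℤ)) (n : ℤ)).erase 0

/-- The index type `{-n,...,-1,1,...,n}` for rows and columns of `2n × 2n` matrices. -/
abbrev Iv (n : ℕ) := {i : ℤ // i ∈ Idx n}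

/-- The matrix unit `E_{a,b}` with a `1` in entry `(a,b)` and `0` elsewhere, for rows and
columns indexed by `{-n,...,-1,1,...,n}`. -/
def EE (k : Type*) [Field k] (n : ℕ) (a b : ℤ) : Matrix (Iv n) (Iv n) k :=
  fun p q => if p.1 = a ∧ q.1 = b then 1 else 0

/-- A type-C poset: a poset on `{-n,...,-1,1,...,n}` such that `i ⪯ j` implies `i ≤ j`,
and for `i ≠ -j`, `i ⪯ j` iff `-j ⪯ -i`. -/
structure TypeCPoset (n : ℕ) where
  le : ℤ → ℤ → Prop
  mem_of_le : ∀ i j, le i j → i ∈ Idx n ∧ j ∈ Idx n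
  refl : ∀ i ∈ Idx n, le i i
  antisymm : ∀ i j, le i j → le j i → i = j
  trans : ∀ i j l, le i j → le j l → le i l
  le_int : ∀ i j, le i j → i ≤ j
  symm : ∀ i j, i ≠ -j → (le i j ↔ le (-j) (-i))

/-- The generating set (in fact a basis, together with spanning diagonal elements) of the
type-C Lie poset algebra determined by the order relation `le`, restricted to the pairs
`{-i, i}` with `i` in the set `S` of positive labels:
`{E_{-i,-i} - E_{i,i}} ∪ {E_{-i,-j} - E_{j,i} : -i ⪯ -j, j ⪯ i} ∪
{E_{-i,j} + E_{-j,i} : -i ⪯ j, -j ⪯ i, i ≠ j} ∪ {E_{-i,i} : -i ⪯ i}`. -/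
def gCgen (k : Type*) [Field k] (n : ℕ) (S : Set ℤ) (le : ℤ → ℤ → Prop) :
    Set (Matrix (Iv n) (Iv n) k) :=
  {M | (∃ i ∈ S, M = EE k n (-i) (-i) - EE k n i i) ∨
       (∃ i ∈ S, ∃ j ∈ S, le (-i) (-j) ∧ le j i ∧ M = EE k n (-i) (-j) - EE k n j i) ∨
       (∃ i ∈ S, ∃ j ∈ S, le (-i) j ∧ le (-j) i ∧ i ≠ j ∧
          M = EE k n (-i) j + EE k n (-j) i) ∨
       (∃ i ∈ S, le (-i) i ∧ M = EE k n (-i) i)}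

/-- The type-C Lie poset algebra `g_C(P)` (as a subspace of matrices, closed under the
commutator) determined by the order relation `le` and set `S` of positive labels. -/
noncomputable def gC (k : Type*) [Field k] (n : ℕ) (S : Set ℤ) (le : ℤ → ℤ → Prop) :
    Submodule k (Matrix (Iv n) (Iv n) k) :=
  Submodule.span k (gCgen k n S le)

/-- The kernel of the Kirillov form `B_F(x,y) = F (xy - yx)` on a subspace `W` of an
associative algebra `A` (with `W` closed under the commutator): the set of `x ∈ W` with
`F (xy - yx) = 0` for all `y ∈ W`. -/
noncomputable def kerB {k A : Type*} [Field k] [Ring A] [Algebra k A]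
    (W : Submodule k A) (F : A →ₗ[k] k) : Submodule k A :=
  W ⊓ ⨅ y ∈ W, LinearMap.ker (F ∘ₗ (LinearMap.mulRight k y - LinearMap.mulLeft k y))

/-- The index of a Lie algebra realized as a subspace `W` of an associative algebra,
closed under the commutator: the minimum over functionals `F` of the dimension of the
kernel of the Kirillov form `B_F`. -/
noncomputable def lieIndex {k A : Type*} [Field k] [Ring A] [Algebra k A]
    (W : Submodule k A) : ℕ :=
  sInf {d : ℕ | ∃ F : A →ₗ[k] k, d = Module.finrank k (kerB W F)}

/-- The order relation `le` (on `{-n,...,-1,1,...,n}`) is of height `(0,1)`: the induced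
poset on the positive elements is an antichain, every chain has at most two elements, and
some chain has exactly two elements. -/
def Height01 (le : ℤ → ℤ → Prop) : Prop :=
  (∀ i j : ℤ, 0 < i → 0 < j → le i j → i = j) ∧
  (∀ x y z : ℤ, le x y → le y z → x ≠ y → y ≠ z → False) ∧
  (∃ x y : ℤ, x ≠ y ∧ le x y)

/-- The adjacency relation of the relation graph `RG(P)`: vertices are the positive labels
`i` (standing for the pairs `{-i, i}`), with `i` adjacent to `j` iff `-i ⪯ j`
(equivalently, by the type-C symmetry, `-j ⪯ i`); `-i ⪯ i` gives a self-loop at `i`. -/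
def adjRG (le : ℤ → ℤ → Prop) (i j : ℤ) : Prop :=
  0 < i ∧ 0 < j ∧ (le (-i) j ∨ le (-j) i)

/-- The edge set of the relation graph `RG(P)`, as a set of unordered pairs. -/
def edgeRG (le : ℤ → ℤ → Prop) : Set (Sym2 ℤ) :=
  {e | ∃ i j, adjRG le i j ∧ e = s(i, j)}

/-- A closed walk of odd length in the graph with adjacency relation `adj`
(self-loops give closed walks of length 1). -/
def OddClosedWalk {V : Type*} (adj : V → V → Prop) : Prop :=
  ∃ (m : ℕ) (w : ℕ → V), Odd m ∧ w m = w 0 ∧ ∀ i < m, adj (w i) (w (i + 1))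

/-- The relation graph `RG(P)` is connected: any two vertices in `{1,...,n}` are joined by
a walk. -/
def ConnRG (n : ℕ) (le : ℤ → ℤ → Prop) : Prop :=
  ∀ i ∈ Finset.Icc (1 : ℤ) (n : ℤ), ∀ j ∈ Finset.Icc (1 : ℤ) (n : ℤ),
    Relation.ReflTransGen (adjRG le) i j

/-!
The diagonal idempotents `e_a = ∑_{|p| ∈ K_a} E_{p,p}` of the components `K_a` of `RG(P)` are
orthogonal, and `g_C(P_{K_a})` lies in the corner `e_a A e_a` of the matrix algebra `A`.
Elements of different corners multiply to zero, so for every functional `F` the kernel of the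
Kirillov form of `F` on `g_C(P) = ⨁ g_C(P_{K_a})` is the direct sum of the kernels on the
summands; this gives `ind g_C(P) ≥ ∑ ind g_C(P_{K_a})`. Conversely, functionals `F_a` realising
the indices of the summands glue to `F = ∑ F_a (e_a · e_a)`, which agrees with `F_a` on
commutators in the `a`-th corner, and this gives the reverse inequality.
-/

open Module Function

section Corner

variable (k : Type*) {A : Type*} [Field k] [Ring A] [Algebra k A]

def corner (e : A) : Submodule k A where
  carrier := {x | e * x * e = x}
  add_mem' {x y} (hx : e * x * e = x) (hy : e * y * e = y) := by
    change e * (x + y) * e = x + y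
    rw [mul_add, add_mul, hx, hy]
  zero_mem' := by simp
  smul_mem' c x (hx : e * x * e = x) := by
    change e * (c • x) * e = c • x
    rw [mul_smul_comm, smul_mul_assoc, hx]

variable {k} {e : A} {x y : A}

lemma mem_corner : x ∈ corner k e ↔ e * x * e = x := Iff.rfl

lemma idem_mul_of_mem_corner (he : IsIdempotentElem e) (hx : x ∈ corner k e) : e * x = x := by
  rw [← hx, ← mul_assoc, ← mul_assoc, he.eq]

lemma mul_idem_of_mem_corner (he : IsIdempotentElem e) (hx : x ∈ corner k e) : x * e = x := by
  rw [← hx, mul_assoc, he.eq]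

lemma mul_mem_corner (he : IsIdempotentElem e) (hx : x ∈ corner k e) (hy : y ∈ corner k e) :
    x * y ∈ corner k e := by
  rw [mem_corner, ← mul_assoc, idem_mul_of_mem_corner he hx, mul_assoc,
    mul_idem_of_mem_corner he hy]

lemma lie_mem_corner (he : IsIdempotentElem e) (hx : x ∈ corner k e) (hy : y ∈ corner k e) :
    x * y - y * x ∈ corner k e :=
  sub_mem (mul_mem_corner he hx hy) (mul_mem_corner he hy hx)

variable {ι : Type*} {e : ι → A} {a b : ι}

lemma OrthogonalIdempotents.mul_eq_zero_of_mem_corner (he : OrthogonalIdempotents e)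
    (hab : a ≠ b) (hx : x ∈ corner k (e a)) (hy : y ∈ corner k (e b)) : x * y = 0 := by
  rw [← mul_idem_of_mem_corner (he.idem a) hx, ← idem_mul_of_mem_corner (he.idem b) hy, mul_assoc,
    ← mul_assoc (e a), he.ortho hab, zero_mul, mul_zero]

lemma OrthogonalIdempotents.compress_eq_zero_of_mem_corner (he : OrthogonalIdempotents e)
    (hab : a ≠ b) (hx : x ∈ corner k (e a)) : e b * x * e b = 0 := by
  rw [← idem_mul_of_mem_corner (he.idem a) hx, ← mul_assoc, he.ortho hab.symm, zero_mul, zero_mul]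

lemma OrthogonalIdempotents.iSupIndep_corner (he : OrthogonalIdempotents e) :
    iSupIndep fun a => corner k (e a) := by
  classical
  rw [iSupIndep_iff_finsetSum_eq_zero_imp_eq_zero]
  intro s v hv hsum a ha
  have hcompress : e a * (∑ b ∈ s, v b) * e a = v a := by
    rw [Finset.mul_sum, Finset.sum_mul, Finset.sum_eq_single_of_mem a ha
      fun b hb hba => he.compress_eq_zero_of_mem_corner hba (hv b hb)]
    exact hv a ha
  rw [← hcompress, hsum, mul_zero, zero_mul]

end Corner

section KirillovKernel

variable {k A ι : Type*} [Field k] [Ring A] [Algebra k A]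

lemma mem_kerB {W : Submodule k A} {F : A →ₗ[k] k} {x : A} :
    x ∈ kerB W F ↔ x ∈ W ∧ ∀ y ∈ W, F (x * y - y * x) = 0 := by
  simp only [kerB, Submodule.mem_inf, Submodule.mem_iInf, LinearMap.mem_ker,
    LinearMap.comp_apply, LinearMap.sub_apply, LinearMap.mulRight_apply,
    LinearMap.mulLeft_apply]

lemma kerB_congr {W : Submodule k A} {F G : A →ₗ[k] k}
    (h : ∀ x ∈ W, ∀ y ∈ W, F (x * y - y * x) = G (x * y - y * x)) : kerB W F = kerB W G := by
  ext x
  simp only [mem_kerB]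
  exact and_congr_right fun hx => forall₂_congr fun y hy => by rw [h x hx y hy]

lemma kerB_iSup_of_mul_eq_zero {W : ι → Submodule k A}
    (hmul : Pairwise fun a b => ∀ x ∈ W a, ∀ y ∈ W b, x * y = 0) (F : A →ₗ[k] k) :
    kerB (⨆ a, W a) F = ⨆ a, kerB (W a) F := by
  classical
  refine le_antisymm (fun x hx => ?_) (iSup_le fun a x hx => ?_)
  · obtain ⟨hxW, hxker⟩ := mem_kerB.1 hx
    obtain ⟨g, hg, rfl⟩ := (Submodule.mem_iSup_iff_exists_finsupp _ _).1 hxW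
    refine Submodule.finsuppSum_mem _ _ _ _ fun a _ => Submodule.mem_iSup_of_mem a ?_
    refine mem_kerB.2 ⟨hg a, fun y hy => ?_⟩
    have hlie : (g.sum fun _ z => z) * y - y * g.sum (fun _ z => z) = g a * y - y * g a := by
      rw [Finsupp.sum, Finset.sum_mul, Finset.mul_sum, ← Finset.sum_sub_distrib]
      refine Finset.sum_eq_single a (fun b _ hba => ?_) (fun ha => ?_)
      · rw [hmul hba _ (hg b) y hy, hmul hba.symm y hy _ (hg b), sub_zero]
      · rw [Finsupp.notMem_support_iff.1 ha, zero_mul, mul_zero, sub_zero]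
    rw [← hlie]
    exact hxker y (Submodule.mem_iSup_of_mem a hy)
  · obtain ⟨hxW, hxker⟩ := mem_kerB.1 hx
    refine mem_kerB.2 ⟨Submodule.mem_iSup_of_mem a hxW, fun y hy => ?_⟩
    refine Submodule.iSup_induction W (motive := fun y => F (x * y - y * x) = 0) hy
      (fun b y hy => ?_) (by simp) (fun y z hy hz => ?_)
    · rcases eq_or_ne a b with rfl | hab
      · exact hxker y hy
      · rw [hmul hab x hxW y hy, hmul hab.symm y hy x hxW, sub_zero, map_zero]
    · rw [mul_add, add_mul, add_sub_add_comm, map_add, hy, hz, add_zero]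

end KirillovKernel

lemma iSupIndep.finrank_iSup {k M ι : Type*} [Field k] [AddCommGroup M] [Module k M]
    [FiniteDimensional k M] [Fintype ι] {V : ι → Submodule k M} (hV : iSupIndep V) :
    finrank k ↥(⨆ a, V a) = ∑ a, finrank k (V a) := by
  classical
  rw [Submodule.iSup_eq_range_dfinsupp_lsum, LinearMap.finrank_range_of_inj
    hV.dfinsupp_lsum_injective]
  exact finrank_directSum k fun a => V a

section LieIndex

variable {k A ι : Type*} [Field k] [Ring A] [Algebra k A]

lemma lieIndex_le (W : Submodule k A) (F : A →ₗ[k] k) : lieIndex W ≤ finrank k (kerB W F) :=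
  Nat.sInf_le ⟨F, rfl⟩

lemma exists_lieIndex_eq (W : Submodule k A) : ∃ F : A →ₗ[k] k, lieIndex W = finrank k (kerB W F) :=
  Nat.sInf_mem (⟨_, 0, rfl⟩ : {d : ℕ | ∃ F : A →ₗ[k] k, d = finrank k (kerB W F)}.Nonempty)

variable [Fintype ι] {e : ι → A} {W : ι → Submodule k A}

lemma finrank_kerB_iSup_of_le_corner [FiniteDimensional k A] (he : OrthogonalIdempotents e)
    (hW : ∀ a, W a ≤ corner k (e a)) (F : A →ₗ[k] k) :
    finrank k (kerB (⨆ a, W a) F) = ∑ a, finrank k (kerB (W a) F) := by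
  rw [kerB_iSup_of_mul_eq_zero (fun a b hab x hx y hy =>
    he.mul_eq_zero_of_mem_corner hab (hW a hx) (hW b hy))]
  exact (he.iSupIndep_corner.mono fun a => inf_le_left.trans (hW a)).finrank_iSup

lemma exists_kerB_eq_of_le_corner (he : OrthogonalIdempotents e) (hW : ∀ a, W a ≤ corner k (e a))
    (G : ι → A →ₗ[k] k) : ∃ F : A →ₗ[k] k, ∀ a, kerB (W a) F = kerB (W a) (G a) := by
  classical
  refine ⟨∑ b, G b ∘ₗ LinearMap.mulLeft k (e b) ∘ₗ LinearMap.mulRight k (e b), fun a =>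
    kerB_congr fun x hx y hy => ?_⟩
  have hlie := lie_mem_corner (he.idem a) (hW a hx) (hW a hy)
  rw [LinearMap.sum_apply, Finset.sum_eq_single_of_mem a (Finset.mem_univ a) fun b _ hba => ?_]
  · simp only [LinearMap.comp_apply, LinearMap.mulLeft_apply, LinearMap.mulRight_apply,
      ← mul_assoc, mem_corner.1 hlie]
  · simp only [LinearMap.comp_apply, LinearMap.mulLeft_apply, LinearMap.mulRight_apply,
      ← mul_assoc, he.compress_eq_zero_of_mem_corner hba.symm hlie, map_zero]

theorem lieIndex_iSup_of_le_corner [FiniteDimensional k A] (he : OrthogonalIdempotents e)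
    (hW : ∀ a, W a ≤ corner k (e a)) : lieIndex (⨆ a, W a) = ∑ a, lieIndex (W a) := by
  choose G hG using fun a => exists_lieIndex_eq (W a)
  obtain ⟨F, hF⟩ := exists_kerB_eq_of_le_corner he hW G
  obtain ⟨F₀, hF₀⟩ := exists_lieIndex_eq (⨆ a, W a)
  refine le_antisymm ?_ ?_
  · calc lieIndex (⨆ a, W a) ≤ finrank k (kerB (⨆ a, W a) F) := lieIndex_le _ F
      _ = ∑ a, lieIndex (W a) := by
        rw [finrank_kerB_iSup_of_le_corner he hW]
        exact Finset.sum_congr rfl fun a _ => by rw [hF a, hG a]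
  · calc ∑ a, lieIndex (W a) ≤ ∑ a, finrank k (kerB (W a) F₀) :=
          Finset.sum_le_sum fun a _ => lieIndex_le _ F₀
      _ = lieIndex (⨆ a, W a) := by rw [hF₀, finrank_kerB_iSup_of_le_corner he hW]

end LieIndex

section TypeC

variable {k : Type*} [Field k] {n : ℕ}

variable (k n) in
noncomputable def blockIdem (T : Set ℤ) : Matrix (Iv n) (Iv n) k :=
  Matrix.diagonal fun p => T.indicator 1 |p.1|

lemma orthogonalIdempotents_blockIdem {ι : Type*} {K : ι → Set ℤ}
    (hK : Pairwise (Disjoint on K)) : OrthogonalIdempotents fun a => blockIdem k n (K a) where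
  idem a := by
    simp only [IsIdempotentElem, blockIdem, Matrix.diagonal_mul_diagonal]
    congr 1
    ext p
    by_cases h : |p.1| ∈ K a <;> simp [h]
  ortho a b hab := by
    simp only [blockIdem, Matrix.diagonal_mul_diagonal, ← Matrix.diagonal_zero]
    congr 1
    ext p
    by_cases h : |p.1| ∈ K a
    · simp [Set.indicator_of_notMem ((hK hab).notMem_of_mem_left h)]
    · simp [h]

lemma EE_mem_corner_blockIdem {T : Set ℤ} {i j : ℤ} (hi : |i| ∈ T) (hj : |j| ∈ T) :
    EE k n i j ∈ corner k (blockIdem k n T) := by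
  ext p q
  simp only [blockIdem, Matrix.diagonal_mul, Matrix.mul_diagonal, EE]
  split_ifs with h
  · simp [h.1 ▸ hi, h.2 ▸ hj]
  · simp

lemma gC_le_corner_blockIdem {T : Set ℤ} (hT : ∀ i ∈ T, 0 < i) (le : ℤ → ℤ → Prop) :
    gC k n T le ≤ corner k (blockIdem k n T) := by
  have habs : ∀ i ∈ T, |i| ∈ T := fun i hi => (abs_of_pos (hT i hi)).symm ▸ hi
  have habs_neg : ∀ i ∈ T, |-i| ∈ T := fun i hi => (abs_neg i).symm ▸ habs i hi
  refine Submodule.span_le.2 ?_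
  rintro M (⟨i, hi, rfl⟩ | ⟨i, hi, j, hj, -, -, rfl⟩ | ⟨i, hi, j, hj, -, -, -, rfl⟩ |
    ⟨i, hi, -, rfl⟩)
  · exact sub_mem (EE_mem_corner_blockIdem (habs_neg i hi) (habs_neg i hi))
      (EE_mem_corner_blockIdem (habs i hi) (habs i hi))
  · exact sub_mem (EE_mem_corner_blockIdem (habs_neg i hi) (habs_neg j hj))
      (EE_mem_corner_blockIdem (habs j hj) (habs i hi))
  · exact add_mem (EE_mem_corner_blockIdem (habs_neg i hi) (habs j hj))
      (EE_mem_corner_blockIdem (habs_neg j hj) (habs i hi))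
  · exact EE_mem_corner_blockIdem (habs_neg i hi) (habs i hi)

end TypeC

section Components

variable {k : Type*} [Field k] {n : ℕ} {ι : Type*}

lemma gCgen_mono {S T : Set ℤ} (h : S ⊆ T) (le : ℤ → ℤ → Prop) :
    gCgen k n S le ⊆ gCgen k n T le := by
  rintro M (⟨i, hi, rfl⟩ | ⟨i, hi, j, hj, h1, h2, rfl⟩ |
    ⟨i, hi, j, hj, h1, h2, h3, rfl⟩ | ⟨i, hi, h1, rfl⟩)
  · exact Or.inl ⟨i, h hi, rfl⟩
  · exact Or.inr (Or.inl ⟨i, h hi, j, h hj, h1, h2, rfl⟩)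
  · exact Or.inr (Or.inr (Or.inl ⟨i, h hi, j, h hj, h1, h2, h3, rfl⟩))
  · exact Or.inr (Or.inr (Or.inr ⟨i, h hi, h1, rfl⟩))

/-- A generator `E_{-i,-j} - E_{j,i}` could join two blocks; `hanti` forces `i = j` there,
while the generators `E_{-i,j} + E_{-j,i}` follow edges of `RG`. -/
lemma gC_eq_iSup_of_edge_closed {S : Set ℤ} {K : ι → Set ℤ} {le : ℤ → ℤ → Prop}
    (hKS : ∀ a, K a ⊆ S) (hcover : ∀ i ∈ S, ∃ a, i ∈ K a)
    (hanti : ∀ i ∈ S, ∀ j ∈ S, le j i → j = i)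
    (hedge : ∀ a, ∀ i ∈ K a, ∀ j ∈ S, le (-i) j → j ∈ K a) :
    gC k n S le = ⨆ a, gC k n (K a) le := by
  refine le_antisymm (Submodule.span_le.2 ?_)
    (iSup_le fun a => Submodule.span_mono (gCgen_mono (hKS a) le))
  rintro M (⟨i, hi, rfl⟩ | ⟨i, hi, j, hj, h1, h2, rfl⟩ |
    ⟨i, hi, j, hj, h1, h2, h3, rfl⟩ | ⟨i, hi, h1, rfl⟩) <;>
    obtain ⟨a, hia⟩ := hcover i hi <;>
    refine Submodule.mem_iSup_of_mem a (Submodule.subset_span ?_)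
  · exact Or.inl ⟨i, hia, rfl⟩
  · obtain rfl := hanti i hi j hj h2
    exact Or.inr (Or.inl ⟨j, hia, j, hia, h1, h2, rfl⟩)
  · exact Or.inr (Or.inr (Or.inl ⟨i, hia, j, hedge a i hia j hj h1, h1, h2, h3, rfl⟩))
  · exact Or.inr (Or.inr (Or.inr ⟨i, hia, h1, rfl⟩))

end Components

instance (le : ℤ → ℤ → Prop) : Std.Symm (adjRG le) :=
  ⟨fun _ _ ⟨hi, hj, h⟩ => ⟨hj, hi, h.symm⟩⟩

theorem stmt11_general (k : Type*) [Field k] (n : ℕ) (P : TypeCPoset n)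
    (h01 : Height01 P.le)
    (ι : Type*) [Fintype ι] (f : ι → ℤ)
    (hdistinct : ∀ a b : ι, Relation.ReflTransGen (adjRG P.le) (f a) (f b) → a = b)
    (hcover : ∀ i ∈ Finset.Icc (1 : ℤ) (n : ℤ), ∃ a, Relation.ReflTransGen (adjRG P.le) (f a) i) :
    lieIndex (gC k n (Set.Icc (1 : ℤ) (n : ℤ)) P.le) =
      ∑ a : ι, lieIndex (gC k n
        {i : ℤ | i ∈ Finset.Icc (1 : ℤ) (n : ℤ) ∧
          Relation.ReflTransGen (adjRG P.le) (f a) i} P.le) := by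
  set K : ι → Set ℤ := fun a =>
    {i | i ∈ Finset.Icc (1 : ℤ) n ∧ Relation.ReflTransGen (adjRG P.le) (f a) i}
  have hpos : ∀ i ∈ Finset.Icc (1 : ℤ) n, 0 < i := fun i hi => (Finset.mem_Icc.1 hi).1
  have hdisj : Pairwise (Disjoint on K) := fun a b hab => Set.disjoint_left.2 fun i hia hib =>
    hab (hdistinct a b (hia.2.trans (Std.Symm.symm _ _ hib.2)))
  rw [← Finset.coe_Icc, gC_eq_iSup_of_edge_closed (K := K) (fun a i hi => hi.1)
      (fun i hi => (hcover i hi).imp fun a ha => ⟨hi, ha⟩)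
      (fun i hi j hj => h01.1 j i (hpos j hj) (hpos i hi))
      (fun a i hi j hj hij => ⟨hj, hi.2.tail ⟨hpos i hi.1, hpos j hj, Or.inl hij⟩⟩)]
  exact lieIndex_iSup_of_le_corner (orthogonalIdempotents_blockIdem hdisj)
    fun a => gC_le_corner_blockIdem (fun i hi => hpos i hi.1) P.le

/-- If `P` is a height-`(0,1)` type-C poset whose relation graph `RG(P)` has
connected components `K₁,...,Kₘ` (here presented by a system `f : ι → ℤ` of
representatives, one per component), then `ind g_C(P) = Σᵢ ind g_C(P_{Kᵢ})`, where
`P_{Kᵢ}` is the poset induced by the elements corresponding to component `Kᵢ`. -/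
theorem stmt11 (k : Type*) [Field k] (n : ℕ) (P : TypeCPoset n)
    (h01 : Height01 P.le)
    (ι : Type*) [Fintype ι] (f : ι → ℤ)
    (hf : ∀ a, f a ∈ Finset.Icc (1 : ℤ) (n : ℤ))
    (hdistinct : ∀ a b : ι, Relation.ReflTransGen (adjRG P.le) (f a) (f b) → a = b)
    (hcover : ∀ i ∈ Finset.Icc (1 : ℤ) (n : ℤ), ∃ a, Relation.ReflTransGen (adjRG P.le) (f a) i) :
    lieIndex (gC k n (Set.Icc (1 : ℤ) (n : ℤ)) P.le) =
      ∑ a : ι, lieIndex (gC k n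
        {i : ℤ | i ∈ Finset.Icc (1 : ℤ) (n : ℤ) ∧
          Relation.ReflTransGen (adjRG P.le) (f a) i} P.le) :=
  stmt11_general k n P h01 ι f hdistinct hcover
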